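/- arXiv:1602.02942 — 3 statements merged into one kernel-verified Lean document; each statement's English description precedes it below -/
import Mathlib

section
/- Let z_1,...,z_d ≥ 0 with z_1 + ... + z_d = 1 and let a = Φ(z_1,...,z_d). Then max_{0 ≤ t ≤ 1} Φ(t z_1, ..., t z_d, 1−t) = a + 1, and the maximum is attained at t = a/(a+1). -/
/-!
Write `a = Φ(z)`. Since `∑ zᵢ = 1`, the entropy of `(t z, 1 - t)` splits and
`Φ(t z, 1 - t) = (a / t) ^ t * (1 / (1 - t)) ^ (1 - t)`, a weighted geometric mean with weights
`t, 1 - t`. By weighted AM-GM it is at most `t (a / t) + (1 - t) / (1 - t) ≤ a + 1`, with equality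
when both values coincide, `a / t = 1 / (1 - t) = a + 1`, i.e. at `t = a / (a + 1)`.
-/

/-- `Φ(x₁,…,x_d) = (x₁^{x₁} ⋯ x_d^{x_d})⁻¹` (real exponents, with the convention `0⁰ = 1`). -/
noncomputable def PhiF {d : ℕ} (x : Fin d → ℝ) : ℝ := 1 / ∏ i, x i ^ x i

open Finset Real

lemma rpow_self_pos {x : ℝ} (hx : 0 ≤ x) : 0 < x ^ x := by
  rcases hx.eq_or_lt with rfl | hx
  · simp
  · exact rpow_pos_of_pos hx x

lemma PhiF_pos {d : ℕ} {x : Fin d → ℝ} (hx : ∀ i, 0 ≤ x i) : 0 < PhiF x :=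
  one_div_pos.mpr <| prod_pos fun i _ => rpow_self_pos (hx i)

lemma prod_mul_rpow_mul_self {ι : Type*} (s : Finset ι) {z : ι → ℝ} (hz : ∀ i ∈ s, 0 ≤ z i)
    (hsum : ∑ i ∈ s, z i = 1) {t : ℝ} (ht : 0 ≤ t) :
    ∏ i ∈ s, (t * z i) ^ (t * z i) = t ^ t * (∏ i ∈ s, z i ^ z i) ^ t := by
  have hfactor : ∀ i ∈ s, (t * z i) ^ (t * z i) = t ^ (t * z i) * (z i ^ z i) ^ t := by
    intro i hi
    rw [mul_rpow ht (hz i hi), ← rpow_mul (hz i hi), mul_comm (z i) t]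
  rw [prod_congr rfl hfactor, prod_mul_distrib,
    finsetProd_rpow _ _ fun i hi => rpow_nonneg (hz i hi) _,
    ← rpow_sum_of_nonneg ht fun i hi => mul_nonneg ht (hz i hi), ← mul_sum, hsum, mul_one]

/-- At `t = 0` and `t = 1` this holds through the conventions `x / 0 = 0` and `0 ^ 0 = 1`. -/
lemma PhiF_snoc_mul {d : ℕ} {z : Fin d → ℝ} (hz : ∀ i, 0 ≤ z i) (hsum : ∑ i, z i = 1)
    {t : ℝ} (ht0 : 0 ≤ t) (ht1 : t ≤ 1) :
    PhiF (Fin.snoc (fun i => t * z i) (1 - t)) = (PhiF z / t) ^ t * (1 / (1 - t)) ^ (1 - t) := by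
  have hP : 0 ≤ ∏ i, z i ^ z i := prod_nonneg fun i _ => (rpow_self_pos (hz i)).le
  rw [div_rpow (PhiF_pos hz).le ht0, div_rpow zero_le_one (sub_nonneg.mpr ht1), one_rpow]
  unfold PhiF
  rw [Fin.prod_univ_castSucc]
  simp only [Fin.snoc_castSucc, Fin.snoc_last]
  rw [prod_mul_rpow_mul_self _ (fun i _ => hz i) hsum ht0, div_rpow zero_le_one hP, one_rpow]
  ring

lemma PhiF_snoc_mul_le {d : ℕ} {z : Fin d → ℝ} (hz : ∀ i, 0 ≤ z i) (hsum : ∑ i, z i = 1)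
    {t : ℝ} (ht0 : 0 ≤ t) (ht1 : t ≤ 1) :
    PhiF (Fin.snoc (fun i => t * z i) (1 - t)) ≤ PhiF z + 1 := by
  have ha := (PhiF_pos hz).le
  have h1t : 0 ≤ 1 - t := sub_nonneg.mpr ht1
  have hmul_div_le : ∀ {s b : ℝ}, 0 ≤ b → s * (b / s) ≤ b := by
    intro s b hb
    rcases eq_or_ne s 0 with rfl | hs
    · simpa using hb
    · rw [mul_div_cancel₀ b hs]
  calc PhiF (Fin.snoc (fun i => t * z i) (1 - t))
      = (PhiF z / t) ^ t * (1 / (1 - t)) ^ (1 - t) := PhiF_snoc_mul hz hsum ht0 ht1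
    _ ≤ t * (PhiF z / t) + (1 - t) * (1 / (1 - t)) :=
      geom_mean_le_arith_mean2_weighted ht0 h1t (div_nonneg ha ht0) (div_nonneg zero_le_one h1t)
        (add_sub_cancel t 1)
    _ ≤ PhiF z + 1 := add_le_add (hmul_div_le ha) (hmul_div_le zero_le_one)

lemma PhiF_snoc_mul_optimal {d : ℕ} {z : Fin d → ℝ} (hz : ∀ i, 0 ≤ z i) (hsum : ∑ i, z i = 1) :
    PhiF (Fin.snoc (fun i => PhiF z / (PhiF z + 1) * z i) (1 - PhiF z / (PhiF z + 1)))
      = PhiF z + 1 := by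
  set a := PhiF z
  have ha : 0 < a := PhiF_pos hz
  have ha1 : 0 < a + 1 := by positivity
  have h1t : 1 - a / (a + 1) = 1 / (a + 1) := by field_simp; ring
  rw [PhiF_snoc_mul hz hsum (by positivity) ((div_le_one ha1).mpr (by linarith))]
  have hfirst : a / (a / (a + 1)) = a + 1 := by field_simp
  have hsecond : 1 / (1 - a / (a + 1)) = a + 1 := by rw [h1t, one_div_one_div]
  rw [hfirst, hsecond, ← rpow_add ha1, add_sub_cancel, rpow_one]

/-- Let `z₁,…,z_d ≥ 0` with `z₁ + ⋯ + z_d = 1` and let `a = Φ(z₁,…,z_d)`. Then the maximum of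
`Φ(t z₁, …, t z_d, 1 − t)` over `t ∈ [0,1]` equals `a + 1`, and it is attained at
`t = a/(a+1)`. -/
theorem phi_extend_max {d : ℕ} (z : Fin d → ℝ) (hz : ∀ i, 0 ≤ z i) (hsum : ∑ i, z i = 1)
    (a : ℝ) (ha : a = PhiF z) :
    (∀ t ∈ Set.Icc (0 : ℝ) 1,
        PhiF (Fin.snoc (fun i => t * z i) (1 - t)) ≤ a + 1) ∧
    PhiF (Fin.snoc (fun i => (a / (a + 1)) * z i) (1 - a / (a + 1))) = a + 1 := by
  subst ha
  exact ⟨fun t ht => PhiF_snoc_mul_le hz hsum ht.1 ht.2, PhiF_snoc_mul_optimal hz hsum⟩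
end

section
/- Let B be an F-algebra and let f(x_1,...,x_d) be a multihomogeneous polynomial in the free nonassociative algebra. If every multihomogeneous (in x_1,...,x_d) component of f(1+x_1, ..., 1+x_d), computed in the free nonassociative algebra with adjoined unit F{X}^♯, is an identity of B, then f is an identity of the unitization B^♯. -/
/-! Auxiliary general definitions: free non-unital non-associative algebra machinery,
codimensions, the algebras `A(m,w)`, infinite binary words, and the functions `Φ`. -/

open Finsupp Filter

/-- The free non-unital non-associative algebra on countably many generators `x₀, x₁, …`. -/
abbrev FreeNA (F : Type*) [Field F] : Type _ := FreeNonUnitalNonAssocAlgebra F ℕ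

variable (F : Type*) [Field F]

/-- Multiset of the variables (with multiplicities) occurring in a non-associative monomial. -/
def varsM : FreeMagma ℕ → Multiset ℕ
  | FreeMagma.of i => {i}
  | FreeMagma.mul x y => varsM x + varsM y

/-- The monomial of the free algebra corresponding to a magma word. -/
noncomputable def wordEmb : FreeMagma ℕ →ₙ* FreeNA F :=
  FreeMagma.lift (FreeNonUnitalNonAssocAlgebra.of F)

variable (A : Type*) [NonUnitalNonAssocSemiring A] [Module F A]
  [IsScalarTower F A A] [SMulCommClass F A A]

/-- Evaluation of polynomials of the free algebra in `A`, at the substitution `φ`. -/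
noncomputable def evalHom (φ : ℕ → A) : FreeNA F →ₙₐ[F] A :=
  FreeNonUnitalNonAssocAlgebra.lift F φ

/-- `f` is a polynomial identity of `A`. -/
def IsIdentityOf (f : FreeNA F) : Prop := ∀ φ : ℕ → A, evalHom F A φ f = 0

/-- The space of polynomial identities of `A`. -/
noncomputable def IdS : Submodule F (FreeNA F) where
  carrier := {f | IsIdentityOf F A f}
  add_mem' := fun hf hg φ => by rw [map_add, hf φ, hg φ, add_zero]
  zero_mem' := fun φ => map_zero _
  smul_mem' := fun c f hf φ => by rw [map_smul, hf φ, smul_zero]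

/-- The space `P_n` of multilinear polynomials in the first `n` variables. -/
noncomputable def Pn (n : ℕ) : Submodule F (FreeNA F) :=
  Submodule.span F {x | ∃ u : FreeMagma ℕ, varsM u = (Finset.range n).val ∧ x = wordEmb F u}

/-- The `n`-th codimension `c_n(A) = dim Pₙ/(Pₙ ∩ Id(A))`, computed as the dimension of the
image of `Pₙ` in the quotient of the free algebra by the identities of `A`. -/
noncomputable def codim (n : ℕ) : ℕ :=
  Module.finrank F ((Pn F n).map (IdS F A).mkQ)

/-- The space `W_n^{(d)}` of polynomials homogeneous of total degree `n` in `x_1, …, x_d`. -/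
noncomputable def Wnd (n d : ℕ) : Submodule F (FreeNA F) :=
  Submodule.span F {x | ∃ u : FreeMagma ℕ,
    Multiset.card (varsM u) = n ∧ (∀ v ∈ varsM u, v < d) ∧ x = wordEmb F u}

/-- `dim W_n^{(d)}(A)`. -/
noncomputable def dimW (n d : ℕ) : ℕ :=
  Module.finrank F ((Wnd F n d).map (IdS F A).mkQ)

/- The unitization of a non-unital `F`-algebra is again an `F`-algebra. -/

variable {F A} in
instance : IsScalarTower F (Unitization F A) (Unitization F A) := ⟨fun r x y => by
  show (r • x) * y = r • (x * y)
  ext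
  · simp only [Unitization.fst_mul, Unitization.fst_smul, smul_eq_mul, mul_assoc]
  · simp only [Unitization.snd_mul, Unitization.snd_smul, Unitization.fst_smul, smul_eq_mul,
      smul_add, smul_mul_assoc, mul_smul]
    rw [smul_comm y.fst r]⟩

variable {F A} in
instance : SMulCommClass F (Unitization F A) (Unitization F A) := ⟨fun r x y => by
  show r • (x * y) = x * (r • y)
  ext
  · simp only [Unitization.fst_mul, Unitization.fst_smul, smul_eq_mul]
    ring
  · simp only [Unitization.snd_mul, Unitization.snd_smul, Unitization.fst_smul, smul_eq_mul,
      smul_add, mul_smul_comm, mul_smul]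
    rw [smul_comm x.fst r]⟩


/-- The multihomogeneous component of multidegree `S` (a multiset of variables) of a polynomial
in the free non-unital non-associative algebra. -/
noncomputable def mcomp (F : Type) [Field F] (S : Multiset ℕ) (f : FreeNA F) : FreeNA F :=
  letI : DecidablePred (fun u : FreeMagma ℕ => varsM u = S) := Classical.decPred _
  MonoidAlgebra.ofCoeff (Finsupp.filter (fun u : FreeMagma ℕ => varsM u = S)
    (show FreeMagma ℕ →₀ F from f.coeff) : FreeMagma ℕ →₀ F)

/-- The substitution `x_i ↦ 1 + x_i`, from the free non-unital non-associative algebra `F{X}`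
to the free non-associative algebra with adjoined unit `F{X}^♯`. -/
noncomputable def substOne (F : Type) [Field F] : FreeNA F →ₙₐ[F] Unitization F (FreeNA F) :=
  FreeNonUnitalNonAssocAlgebra.lift F
    (fun i : ℕ => 1 + Unitization.inr (FreeNonUnitalNonAssocAlgebra.of F i))

/-!
Write `φ(x_i) = c_i + b_i` with `c_i ∈ F`, `b_i ∈ B`. Evaluating `f` at `φ` factors through
`f(c₁ + x₁, c₂ + x₂, …) ∈ F{X}^♯` followed by `x_i ↦ b_i`. Since `f` is homogeneous of
multidegree `S`, the component of multidegree `T` of `f(c + x)` is `∏_{i ∈ S - T} c_i` times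
that of `f(1 + x)` (for invertible `c_i` this is `f(c + x) = f(c(1 + x/c))`; the coefficientwise
form needs no division). Hence the constant term of `f(c + x)` vanishes and all its other
components are identities of `B`.
-/

section

variable {F : Type} [Field F]

lemma wordEmb_eq_single (u : FreeMagma ℕ) : wordEmb F u = MonoidAlgebra.single u (1 : F) := by
  induction u with
  | ih1 i => rfl
  | ih2 a b iha ihb =>
    change wordEmb F a * wordEmb F b = _
    rw [iha, ihb, MonoidAlgebra.single_mul_single, one_mul]

lemma FreeNA.coeff_mul_mul (g h : FreeNA F) (a b : FreeMagma ℕ) :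
    (g * h).coeff (FreeMagma.mul a b) = g.coeff a * h.coeff b := by
  refine (MonoidAlgebra.coeff_mul_antidiag g h _ {(a, b)} fun {p} => ?_).trans
    (Finset.sum_singleton _ _)
  rcases p with ⟨x, y⟩
  simp only [Finset.mem_singleton, Prod.mk.injEq]
  exact ⟨fun ⟨ha, hb⟩ => ha ▸ hb ▸ rfl, fun h => by injection h with ha hb; exact ⟨ha, hb⟩⟩

lemma FreeNA.coeff_mul_of (g h : FreeNA F) (i : ℕ) :
    (g * h).coeff (FreeMagma.of i) = 0 := by
  refine (MonoidAlgebra.coeff_mul_antidiag g h _ ∅ fun {p} => ?_).trans Finset.sum_empty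
  rcases p with ⟨x, y⟩
  change _ ↔ FreeMagma.mul x y = FreeMagma.of i
  simp

lemma coeff_mcomp (S : Multiset ℕ) (g : FreeNA F) (w : FreeMagma ℕ) [Decidable (varsM w = S)] :
    (mcomp F S g).coeff w = if varsM w = S then g.coeff w else 0 := by
  by_cases h : varsM w = S
  · rw [if_pos h]
    exact if_pos h
  · rw [if_neg h]
    exact if_neg h

lemma sum_mcomp (g : FreeNA F) :
    ∑ T ∈ g.coeff.support.image varsM, mcomp F T g = g := by
  classical
  ext w
  simp only [MonoidAlgebra.coeff_sum, Finsupp.finsetSum_apply, coeff_mcomp, Finset.sum_ite_eq]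
  split_ifs with hw
  · rfl
  · by_contra hne
    exact hw (Finset.mem_image_of_mem varsM (Finsupp.mem_support_iff.mpr (Ne.symm hne)))

lemma isIdentityOf_of_forall_mcomp (B : Type*) [NonUnitalNonAssocSemiring B] [Module F B]
    [IsScalarTower F B B] [SMulCommClass F B B] (g : FreeNA F)
    (h : ∀ T, IsIdentityOf F B (mcomp F T g)) : IsIdentityOf F B g := by
  intro φ
  rw [← sum_mcomp g, map_sum]
  exact Finset.sum_eq_zero fun T _ => h T φ

end

section Unitization

variable {R A C : Type*} [CommRing R] [NonUnitalNonAssocSemiring A] [Module R A]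
  [NonUnitalNonAssocSemiring C] [Module R C]

def unitizationMap (g : A →ₙₐ[R] C) : Unitization R A →ₙₐ[R] Unitization R C where
  toFun x := Unitization.inl x.fst + Unitization.inr (g x.snd)
  map_smul' r x := by ext <;> simp
  map_zero' := by ext <;> simp
  map_add' x y := by ext <;> simp [add_add_add_comm]
  map_mul' x y := by ext <;> simp

end Unitization

section Rescaling

variable {F : Type} [Field F]

noncomputable def shiftSubst (c : ℕ → F) : FreeNA F →ₙₐ[F] Unitization F (FreeNA F) :=
  FreeNonUnitalNonAssocAlgebra.lift F
    (fun i => Unitization.inl (c i) + Unitization.inr (FreeNonUnitalNonAssocAlgebra.of F i))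

/-- The relation between `p = f(c + x)` and `q = f(1 + x)` for `f` homogeneous of multidegree
`S`. -/
structure IsRescaled (c : ℕ → F) (S : Multiset ℕ) (p q : Unitization F (FreeNA F)) : Prop where
  fst_eq : p.fst = (S.map c).prod * q.fst
  coeff_eq_zero : ∀ w, ¬ varsM w ≤ S → q.snd.coeff w = 0
  coeff_eq : ∀ w, p.snd.coeff w = ((S - varsM w).map c).prod * q.snd.coeff w

namespace IsRescaled

variable {c : ℕ → F} {S T : Multiset ℕ} {p q p' q' : Unitization F (FreeNA F)}

lemma zero : IsRescaled c S 0 0 :=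
  ⟨by simp, fun _ _ => rfl, fun _ => by simp⟩

lemma add (h : IsRescaled c S p q) (h' : IsRescaled c S p' q') :
    IsRescaled c S (p + p') (q + q') where
  fst_eq := by simp [h.fst_eq, h'.fst_eq, mul_add]
  coeff_eq_zero w hw := by simp [h.coeff_eq_zero w hw, h'.coeff_eq_zero w hw]
  coeff_eq w := by simp [h.coeff_eq w, h'.coeff_eq w, mul_add]

lemma smul (h : IsRescaled c S p q) (r : F) : IsRescaled c S (r • p) (r • q) where
  fst_eq := by simp [h.fst_eq, mul_left_comm]
  coeff_eq_zero w hw := by simp [h.coeff_eq_zero w hw]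
  coeff_eq w := by simp [h.coeff_eq w, mul_left_comm]

lemma prod_mul_coeff (h : IsRescaled c S p q) (U : Multiset ℕ) (w : FreeMagma ℕ) :
    ((U + S - varsM w).map c).prod * q.snd.coeff w = (U.map c).prod * p.snd.coeff w := by
  by_cases hw : varsM w ≤ S
  · rw [h.coeff_eq, add_tsub_assoc_of_le hw, Multiset.map_add, Multiset.prod_add, mul_assoc]
  · rw [h.coeff_eq, h.coeff_eq_zero w hw, mul_zero, mul_zero, mul_zero]

lemma coeff_snd_mul (h : IsRescaled c S p q) (h' : IsRescaled c T p' q') (w : FreeMagma ℕ) :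
    (p.snd * p'.snd).coeff w = ((S + T - varsM w).map c).prod * (q.snd * q'.snd).coeff w := by
  cases w with
  | of i => simp only [FreeNA.coeff_mul_of, mul_zero]
  | mul w₁ w₂ =>
    rw [FreeNA.coeff_mul_mul, FreeNA.coeff_mul_mul, h.coeff_eq, h'.coeff_eq]
    by_cases h₁ : varsM w₁ ≤ S
    · by_cases h₂ : varsM w₂ ≤ T
      · change _ = ((S + T - (varsM w₁ + varsM w₂)).map c).prod * _
        rw [← tsub_add_tsub_comm h₁ h₂, Multiset.map_add, Multiset.prod_add]
        ring
      · rw [h'.coeff_eq_zero w₂ h₂, mul_zero, mul_zero, mul_zero, mul_zero]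
    · rw [h.coeff_eq_zero w₁ h₁, mul_zero, zero_mul, zero_mul, mul_zero]

lemma mul (h : IsRescaled c S p q) (h' : IsRescaled c T p' q') :
    IsRescaled c (S + T) (p * p') (q * q') where
  fst_eq := by
    simp only [Unitization.fst_mul, h.fst_eq, h'.fst_eq, Multiset.map_add, Multiset.prod_add]
    ring
  coeff_eq_zero w hw := by
    have hS : ¬ varsM w ≤ S := fun hS => hw (hS.trans (Multiset.le_add_right S T))
    have hT : ¬ varsM w ≤ T := fun hT => hw (hT.trans (Multiset.le_add_left T S))
    simp only [Unitization.snd_mul, MonoidAlgebra.coeff_add, Finsupp.add_apply,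
      MonoidAlgebra.coeff_smul_apply, h.coeff_eq_zero w hS, h'.coeff_eq_zero w hT, smul_zero,
      zero_add]
    cases w with
    | of i => exact FreeNA.coeff_mul_of _ _ i
    | mul w₁ w₂ =>
      rw [FreeNA.coeff_mul_mul]
      by_cases h₁ : varsM w₁ ≤ S
      · rw [h'.coeff_eq_zero w₂ fun h₂ => hw (add_le_add h₁ h₂), mul_zero]
      · rw [h.coeff_eq_zero w₁ h₁, zero_mul]
  coeff_eq w := by
    have h₁ := h'.prod_mul_coeff S w
    have h₂ := h.prod_mul_coeff T w
    rw [add_comm T S] at h₂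
    simp only [Unitization.snd_mul, MonoidAlgebra.coeff_add, Finsupp.add_apply,
      MonoidAlgebra.coeff_smul_apply, smul_eq_mul, h.fst_eq, h'.fst_eq, h.coeff_snd_mul h' w]
    linear_combination -q.fst * h₁ - q'.fst * h₂

lemma mcomp_snd (h : IsRescaled c S p q) (T : Multiset ℕ) :
    mcomp F T p.snd = ((S - T).map c).prod • mcomp F T q.snd := by
  classical
  ext w
  rw [MonoidAlgebra.coeff_smul_apply, coeff_mcomp, coeff_mcomp]
  split_ifs with hw
  · rw [h.coeff_eq, hw, smul_eq_mul]
  · rw [smul_zero]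

end IsRescaled

lemma isRescaled_of (c : ℕ → F) (i : ℕ) :
    IsRescaled c {i} (shiftSubst c (FreeNonUnitalNonAssocAlgebra.of F i))
      (substOne F (FreeNonUnitalNonAssocAlgebra.of F i)) := by
  classical
  simp only [shiftSubst, substOne, FreeNonUnitalNonAssocAlgebra.lift_of_apply]
  have hcoeff (w : FreeMagma ℕ) : (FreeNonUnitalNonAssocAlgebra.of F i).coeff w =
      if FreeMagma.of i = w then 1 else 0 := Finsupp.single_apply
  refine ⟨by simp, fun w hw => ?_, fun w => ?_⟩ <;> simp only [Unitization.snd_add,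
    Unitization.snd_inl, Unitization.snd_one, Unitization.snd_inr, zero_add, hcoeff]
  · exact if_neg fun hi : FreeMagma.of i = w => hw (hi ▸ le_rfl)
  · split_ifs with hi
    · simp [← hi, varsM]
    · rw [mul_zero]

lemma isRescaled_wordEmb (c : ℕ → F) (u : FreeMagma ℕ) :
    IsRescaled c (varsM u) (shiftSubst c (wordEmb F u)) (substOne F (wordEmb F u)) := by
  induction u with
  | ih1 i => exact isRescaled_of c i
  | ih2 a b iha ihb =>
    change IsRescaled c (varsM a + varsM b) (shiftSubst c (wordEmb F a * wordEmb F b))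
      (substOne F (wordEmb F a * wordEmb F b))
    rw [map_mul, map_mul]
    exact iha.mul ihb

lemma isRescaled_of_mcomp_eq (c : ℕ → F) {S : Multiset ℕ} {f : FreeNA F} (hf : mcomp F S f = f) :
    IsRescaled c S (shiftSubst c f) (substOne F f) := by
  classical
  have hsupp (u : FreeMagma ℕ) (hu : u ∈ f.coeff.support) : varsM u = S := by
    by_contra hne
    rw [Finsupp.mem_support_iff, ← hf, coeff_mcomp, if_neg hne] at hu
    exact hu rfl
  rw [← MonoidAlgebra.sum_coeff_single f]
  refine Finset.sum_induction _ (fun g => IsRescaled c S (shiftSubst c g) (substOne F g))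
    (fun g g' hg hg' => ?_) (by simpa using IsRescaled.zero) fun u hu => ?_
  · simpa only [map_add] using hg.add hg'
  · rw [← mul_one (f.coeff u), ← MonoidAlgebra.smul_single', ← wordEmb_eq_single, map_smul,
      map_smul, ← hsupp u hu]
    exact (isRescaled_wordEmb c u).smul _

lemma evalHom_unitization_eq_comp (B : Type*) [NonUnitalNonAssocSemiring B]
    [Module F B] [IsScalarTower F B B] [SMulCommClass F B B] (φ : ℕ → Unitization F B) :
    evalHom F (Unitization F B) φ =
      (unitizationMap (evalHom F B fun i => (φ i).snd)).comp (shiftSubst fun i => (φ i).fst) := by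
  refine FreeNonUnitalNonAssocAlgebra.hom_ext F fun i => ?_
  ext <;> simp [evalHom, shiftSubst, unitizationMap]

end Rescaling

theorem identity_of_unitization_of_components_general (F : Type) [Field F]
    (B : Type) [NonUnitalNonAssocRing B] [Module F B]
    [IsScalarTower F B B] [SMulCommClass F B B]
    (f : FreeNA F) (S : Multiset ℕ)
    (hhom : mcomp F S f = f)
    (hconst : (substOne F f).fst = 0)
    (hcomp : ∀ S' : Multiset ℕ, IsIdentityOf F B (mcomp F S' (substOne F f).snd)) :
    IsIdentityOf F (Unitization F B) f := by
  intro φ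
  have hf := isRescaled_of_mcomp_eq (fun i => (φ i).fst) hhom
  have hsnd : IsIdentityOf F B (shiftSubst (fun i => (φ i).fst) f).snd :=
    isIdentityOf_of_forall_mcomp B _ fun T ψ => by
      rw [hf.mcomp_snd T, map_smul, hcomp T ψ, smul_zero]
  rw [evalHom_unitization_eq_comp, NonUnitalAlgHom.comp_apply]
  ext
  · simp [unitizationMap, hf.fst_eq, hconst]
  · simp [unitizationMap, hsnd _]

/-- Let `B` be an `F`-algebra and `f(x₁,…,x_d)` a multihomogeneous polynomial in the free
non-associative algebra. If every multihomogeneous (in `x₁,…,x_d`) component of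
`f(1+x₁,…,1+x_d)` — including its constant component — is an identity of `B`, then `f` is an
identity of the unitization `B^♯`. -/
theorem identity_of_unitization_of_components (F : Type) [Field F] [CharZero F]
    (B : Type) [NonUnitalNonAssocRing B] [Module F B]
    [IsScalarTower F B B] [SMulCommClass F B B]
    (d : ℕ) (f : FreeNA F) (S : Multiset ℕ)
    (hS : ∀ v ∈ S, v < d) (hhom : mcomp F S f = f)
    (hconst : (substOne F f).fst = 0)
    (hcomp : ∀ S' : Multiset ℕ, IsIdentityOf F B (mcomp F S' (substOne F f).snd)) :
    IsIdentityOf F (Unitization F B) f :=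
  identity_of_unitization_of_components_general F B f S hhom hconst hcomp
end

section
/- Let m ≥ 2 and let w be a Sturmian or periodic word over {0,1} with slope α, and β = 1/(m+α). For any ε > 0 there exist a constant C, positive integers n_1 < n_2 < ... , and partitions λ^{(i)} of n_i, such that for all sufficiently large i: (1) |Φ(λ^{(i)}) − Φ_0(β) − 1| < ε; (2) n_{i+1} − n_i < C; and (3) λ^{(i)} has one of the following two forms for some integers r, j: λ^{(i)} = (j, (m−1)r + w_1 + ... + w_r, r, 1) with j ≥ (m−1)r + w_1 + ... + w_r and n_i = j + mr + w_1 + ... + w_r + 1, or λ^{(i)} = ((m−1)r + w_1 + ... + w_r, j, r, 1) with (m−1)r + w_1 + ... + w_r > j ≥ r and n_i = j + mr + w_1 + ... + w_r + 1. -/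
open Filter

/-- `Φ₀(x) = 1/(xˣ (1-x)^{1-x})` (real exponents, with the convention `0⁰ = 1`). -/
noncomputable def Phi0 (x : ℝ) : ℝ := 1 / (x ^ x * (1 - x) ^ (1 - x))

/-- `Φ(λ)` for a partition `λ` of `n`. -/
noncomputable def PhiPart {d : ℕ} (n : ℕ) (lam : Fin d → ℕ) : ℝ :=
  PhiF fun i => (lam i : ℝ) / (n : ℝ)

/-- The number of distinct factors of length `n` of the infinite word `w = w₁w₂⋯`. -/
noncomputable def wordComplexity (w : ℕ → ℕ) (n : ℕ) : ℕ :=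
  Set.ncard {s : Fin n → ℕ | ∃ i : ℕ, 1 ≤ i ∧ ∀ t : Fin n, s t = w (i + (t : ℕ))}

/-- `w` is a Sturmian word: its complexity is `n + 1` for every `n ≥ 1`. -/
def IsSturmian (w : ℕ → ℕ) : Prop := ∀ n : ℕ, 1 ≤ n → wordComplexity w n = n + 1

/-- `w` is a (nonzero) periodic word. -/
def IsPeriodicWord (w : ℕ → ℕ) : Prop :=
  (∃ T : ℕ, 1 ≤ T ∧ ∀ i : ℕ, 1 ≤ i → w (i + T) = w i) ∧ ∃ i : ℕ, 1 ≤ i ∧ w i ≠ 0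

/-- The slope `π(w) = lim (w₁ + ⋯ + wₙ)/n` of the word `w` equals `α`. -/
def HasSlope (w : ℕ → ℕ) (α : ℝ) : Prop :=
  Tendsto (fun n : ℕ => ((∑ i ∈ Finset.Icc 1 n, w i : ℕ) : ℝ) / (n : ℝ)) atTop (nhds α)

/-! Partitions `(j, (m-1)r + w₁ + ⋯ + w_r, r, 1)` with `j ≈ c r` have shape tending to the
probability vector proportional to `(c, m - 1 + α, 1, 0)`, and `Φ = exp (Shannon entropy)` is
continuous there. By the grouping rule for entropy, `Φ(1 - t, t(1 - β), tβ, 0) = Φ₀(t) Φ₀(β)^t`,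
and for `A = Φ₀(β)`, `t = A/(1+A)` this equals `1 + A`; `c = (m + α)/A` realises exactly this
vector. Taking `j = ⌈c r⌉` keeps the gaps bounded, and since `Φ` is symmetric, `j` is placed first
or second according to whether it exceeds `(m-1)r + w₁ + ⋯ + w_r`. -/

open Real Topology Finset

lemma rpow_self_eq_exp_neg_negMulLog {x : ℝ} (hx : 0 ≤ x) : x ^ x = exp (-negMulLog x) := by
  rcases hx.eq_or_lt with rfl | hx
  · simp
  · rw [rpow_def_of_pos hx, negMulLog, neg_mul, neg_neg, mul_comm]

lemma PhiF_eq_exp_sum_negMulLog {d : ℕ} {x : Fin d → ℝ} (hx : ∀ i, 0 ≤ x i) :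
    PhiF x = exp (∑ i, negMulLog (x i)) := by
  simp only [PhiF, rpow_self_eq_exp_neg_negMulLog (hx _), exp_neg, one_div]
  rw [prod_inv_distrib, inv_inv, exp_sum]

lemma Phi0_eq_exp_binEntropy {x : ℝ} (h0 : 0 ≤ x) (h1 : x ≤ 1) : Phi0 x = exp (binEntropy x) := by
  rw [Phi0, rpow_self_eq_exp_neg_negMulLog h0, rpow_self_eq_exp_neg_negMulLog (sub_nonneg.2 h1),
    ← exp_add, one_div, ← exp_neg, binEntropy_eq_negMulLog_add_negMulLog_one_sub]
  ring_nf

lemma Phi0_pos {x : ℝ} (h0 : 0 ≤ x) (h1 : x ≤ 1) : 0 < Phi0 x :=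
  Phi0_eq_exp_binEntropy h0 h1 ▸ exp_pos _

lemma PhiPart_comp_perm {d : ℕ} (n : ℕ) (lam : Fin d → ℕ) (σ : Equiv.Perm (Fin d)) :
    PhiPart n (lam ∘ σ) = PhiPart n lam := by
  simp only [PhiPart, PhiF, Function.comp_apply]
  exact congrArg _ (Equiv.prod_comp σ fun i => ((lam i : ℝ) / n) ^ ((lam i : ℝ) / n))

lemma Phi0_le_inv {x : ℝ} (h0 : 0 < x) (h1 : x ≤ 1 / 2) : Phi0 x ≤ x⁻¹ := by
  rw [Phi0_eq_exp_binEntropy h0.le (by linarith), ← exp_log (inv_pos.2 h0), log_inv, exp_le_exp,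
    binEntropy, log_inv, log_inv]
  have : log x ≤ log (1 - x) := log_le_log h0 (by linarith)
  nlinarith

lemma PhiF_eq_Phi0_mul_Phi0_rpow {t β : ℝ} (ht0 : 0 ≤ t) (ht1 : t ≤ 1) (hβ0 : 0 ≤ β)
    (hβ1 : β ≤ 1) :
    PhiF ![1 - t, t * (1 - β), t * β, 0] = Phi0 t * Phi0 β ^ t := by
  have hx : ∀ i, 0 ≤ (![1 - t, t * (1 - β), t * β, 0] : Fin 4 → ℝ) i := by
    intro i; fin_cases i <;> simp <;> nlinarith
  rw [PhiF_eq_exp_sum_negMulLog hx, Phi0_eq_exp_binEntropy ht0 ht1,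
    Phi0_eq_exp_binEntropy hβ0 hβ1, ← exp_mul, ← exp_add, Fin.sum_univ_four]
  simp only [Matrix.cons_val, negMulLog_mul, negMulLog_zero,
    binEntropy_eq_negMulLog_add_negMulLog_one_sub]
  congr 1
  ring

lemma Phi0_mul_rpow_eq_one_add {A : ℝ} (hA : 0 < A) :
    Phi0 (A / (1 + A)) * A ^ (A / (1 + A)) = 1 + A := by
  have h1A : 0 < 1 + A := by linarith
  have hsub : 1 - A / (1 + A) = (1 + A)⁻¹ := by field_simp; ring
  rw [Phi0_eq_exp_binEntropy (by positivity) (div_le_one_of_le₀ (by linarith) h1A.le),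
    rpow_def_of_pos hA, ← exp_add, binEntropy, hsub, inv_inv, log_inv, log_div hA.ne' h1A.ne']
  conv_rhs => rw [← exp_log h1A]
  congr 1
  field_simp
  ring

lemma tendsto_PhiPart {ι : Type*} {l : Filter ι} [l.NeBot] {d : ℕ} {n : ι → ℕ}
    {lam : ι → Fin d → ℕ} {x : Fin d → ℝ}
    (h : ∀ k, Tendsto (fun i => (lam i k : ℝ) / n i) l (𝓝 (x k))) :
    Tendsto (fun i => PhiPart (n i) (lam i)) l (𝓝 (PhiF x)) := by
  have hx (k : Fin d) : 0 ≤ x k := ge_of_tendsto' (h k) fun i => by positivity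
  rw [PhiF_eq_exp_sum_negMulLog hx]
  refine ((continuous_exp.tendsto _).comp (tendsto_finsetSum _ fun k _ =>
    (continuous_negMulLog.tendsto _).comp (h k))).congr fun i => ?_
  exact (PhiF_eq_exp_sum_negMulLog fun k => by positivity).symm

lemma tendsto_PhiPart_sum_of_tendsto_div {d : ℕ} {lam : ℕ → Fin d → ℕ} {y : Fin d → ℝ}
    (h : ∀ k, Tendsto (fun i => (lam i k : ℝ) / i) atTop (𝓝 (y k))) (hy : ∑ k, y k ≠ 0) :
    Tendsto (fun i => PhiPart (∑ k, lam i k) (lam i)) atTop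
      (𝓝 (PhiF fun k => y k / ∑ k, y k)) := by
  have hsum : Tendsto (fun i => ((∑ k, lam i k : ℕ) : ℝ) / i) atTop (𝓝 (∑ k, y k)) := by
    simpa only [Nat.cast_sum, sum_div] using tendsto_finsetSum univ fun k _ => h k
  refine tendsto_PhiPart fun k => ((h k).div hsum hy).congr' ?_
  filter_upwards [eventually_ne_atTop 0] with i hi
  exact div_div_div_cancel_right₀ (Nat.cast_ne_zero.2 hi) _ _

lemma PhiF_optimal_shape {γ : ℝ} (hγ : 1 ≤ γ) :
    PhiF (fun k => ![γ / Phi0 γ⁻¹, γ - 1, 1, 0] k / ∑ k, ![γ / Phi0 γ⁻¹, γ - 1, 1, 0] k) =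
      1 + Phi0 γ⁻¹ := by
  have hγ0 : 0 < γ := by linarith
  have hA := Phi0_pos (inv_pos.2 hγ0).le (inv_le_one_of_one_le₀ hγ)
  set A := Phi0 γ⁻¹
  have hshape : (fun k => ![γ / A, γ - 1, 1, 0] k / ∑ k, ![γ / A, γ - 1, 1, 0] k) =
      ![1 - A / (1 + A), A / (1 + A) * (1 - γ⁻¹), A / (1 + A) * γ⁻¹, 0] := by
    funext k
    have : γ / A + (γ - 1) + 1 + 0 = γ * (1 + A) / A := by field_simp; ring
    fin_cases k <;> simp [Fin.sum_univ_four, this] <;> field_simp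
    ring
  rw [hshape, PhiF_eq_Phi0_mul_Phi0_rpow (by positivity)
    (div_le_one_of_le₀ (by linarith) (by positivity)) (by positivity) (inv_le_one_of_one_le₀ hγ),
    Phi0_mul_rpow_eq_one_add hA]

lemma HasSlope.nonneg {w : ℕ → ℕ} {α : ℝ} (hα : HasSlope w α) : 0 ≤ α :=
  ge_of_tendsto' hα fun _ => by positivity

lemma HasSlope.tendsto_mul_add_div {w : ℕ → ℕ} {α : ℝ} (hα : HasSlope w α) (a : ℕ) :
    Tendsto (fun i : ℕ => ((a * i + ∑ s ∈ Icc 1 i, w s : ℕ) : ℝ) / i) atTop (𝓝 (a + α)) := by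
  refine (tendsto_const_nhds.add hα).congr' ?_
  filter_upwards [eventually_ne_atTop 0] with i hi
  have : (i : ℝ) ≠ 0 := Nat.cast_ne_zero.2 hi
  push_cast
  field_simp

lemma HasSlope.tendsto_PhiPart_ceil {w : ℕ → ℕ} {α : ℝ} (hα : HasSlope w α) {m : ℕ}
    (hm : 1 ≤ m) {c : ℝ} (hc : c = (m + α) / Phi0 (m + α)⁻¹) :
    Tendsto (fun i : ℕ => PhiPart (⌈c * i⌉₊ + m * i + ∑ s ∈ Icc 1 i, w s + 1)
        ![⌈c * i⌉₊, (m - 1) * i + ∑ s ∈ Icc 1 i, w s, i, 1]) atTop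
      (𝓝 (1 + Phi0 (m + α)⁻¹)) := by
  have hγ : (1 : ℝ) ≤ m + α := le_add_of_le_of_nonneg (by exact_mod_cast hm) hα.nonneg
  have hc0 : 0 ≤ c := hc ▸ div_nonneg (by linarith) (Phi0_pos (by positivity)
    (inv_le_one_of_one_le₀ hγ)).le
  set lam : ℕ → Fin 4 → ℕ := fun i => ![⌈c * i⌉₊, (m - 1) * i + ∑ s ∈ Icc 1 i, w s, i, 1]
  have hsum (i : ℕ) : ∑ k, lam i k = ⌈c * i⌉₊ + m * i + ∑ s ∈ Icc 1 i, w s + 1 := by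
    have : (m - 1) * i + i = m * i := by rw [← Nat.succ_mul]; congr 1; omega
    simp only [lam, Fin.sum_univ_four, Matrix.cons_val]
    omega
  simp only [← hsum]
  rw [← PhiF_optimal_shape hγ, ← hc]
  refine tendsto_PhiPart_sum_of_tendsto_div (fun k => ?_) ?_
  · fin_cases k
    · exact (tendsto_nat_ceil_mul_div_atTop hc0).comp tendsto_natCast_atTop_atTop
    · show Tendsto (fun i : ℕ => (((m - 1) * i + ∑ s ∈ Icc 1 i, w s : ℕ) : ℝ) / i) atTop
        (𝓝 (m + α - 1))
      convert hα.tendsto_mul_add_div (m - 1) using 2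
      push_cast [Nat.cast_sub hm]
      ring
    · exact tendsto_const_nhds.congr' <| (eventually_ne_atTop 0).mono fun i hi =>
        (div_self (Nat.cast_ne_zero.2 hi)).symm
    · show Tendsto (fun i : ℕ => ((1 : ℕ) : ℝ) / i) atTop (𝓝 0)
      simpa only [Nat.cast_one] using tendsto_one_div_atTop_nhds_zero_nat (𝕜 := ℝ)
  · simp only [Fin.sum_univ_four, Matrix.cons_val]
    linarith

lemma strictMono_ceil_mul_add {c : ℝ} (hc : 0 ≤ c) {m : ℕ} (hm : 1 ≤ m) (w : ℕ → ℕ) :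
    StrictMono fun i : ℕ => ⌈c * i⌉₊ + m * i + ∑ s ∈ Icc 1 i, w s + 1 := by
  refine strictMono_nat_of_lt_succ fun i => ?_
  have hceil : ⌈c * i⌉₊ ≤ ⌈c * (i + 1 : ℕ)⌉₊ :=
    Nat.ceil_mono (mul_le_mul_of_nonneg_left (by simp) hc)
  have hS : ∑ s ∈ Icc 1 i, w s ≤ ∑ s ∈ Icc 1 (i + 1), w s :=
    sum_le_sum_of_subset (Icc_subset_Icc le_rfl i.le_succ)
  rw [Nat.mul_succ]
  omega

lemma ceil_mul_add_succ_sub_lt {c : ℝ} (hc : 0 ≤ c) (m : ℕ) {w : ℕ → ℕ} (hw : ∀ i, w i ≤ 1)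
    (i : ℕ) :
    ((⌈c * (i + 1 : ℕ)⌉₊ + m * (i + 1) + ∑ s ∈ Icc 1 (i + 1), w s + 1 : ℕ) : ℝ) -
      (⌈c * i⌉₊ + m * i + ∑ s ∈ Icc 1 i, w s + 1 : ℕ) < c + m + 2 := by
  have hceil := Nat.ceil_lt_add_one (by positivity : 0 ≤ c * (i + 1 : ℕ))
  have hceil' := Nat.le_ceil (c * i)
  have hS : ∑ s ∈ Icc 1 (i + 1), w s ≤ ∑ s ∈ Icc 1 i, w s + 1 := by
    rw [sum_Icc_succ_top (by omega)]
    exact Nat.add_le_add_left (hw _) _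
  have hS' : ((∑ s ∈ Icc 1 (i + 1), w s : ℕ) : ℝ) ≤ (∑ s ∈ Icc 1 i, w s : ℕ) + 1 := by
    exact_mod_cast hS
  push_cast at hceil hS' ⊢
  linarith

theorem exists_partitions_phi_close_general (m : ℕ) (hm : 2 ≤ m) (w : ℕ → ℕ) (hw : ∀ i, w i ≤ 1)
    (α : ℝ) (hα : HasSlope w α) (β : ℝ) (hβ : β = 1 / ((m : ℝ) + α))
    (ε : ℝ) (hε : 0 < ε) :
    ∃ (C : ℝ) (nseq : ℕ → ℕ) (lam : ℕ → Fin 4 → ℕ),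
      StrictMono nseq ∧ (∀ i, 1 ≤ nseq i) ∧
      ∃ i0 : ℕ, ∀ i : ℕ, i0 ≤ i →
        |PhiPart (nseq i) (lam i) - Phi0 β - 1| < ε ∧
        ((nseq (i + 1) : ℝ) - (nseq i : ℝ) < C) ∧
        ∃ r j : ℕ,
          nseq i = j + m * r + (∑ s ∈ Finset.Icc 1 r, w s) + 1 ∧
          ((lam i = ![j, (m - 1) * r + ∑ s ∈ Finset.Icc 1 r, w s, r, 1] ∧
              (m - 1) * r + (∑ s ∈ Finset.Icc 1 r, w s) ≤ j) ∨
           (lam i = ![(m - 1) * r + ∑ s ∈ Finset.Icc 1 r, w s, j, r, 1] ∧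
              r ≤ j ∧ j < (m - 1) * r + ∑ s ∈ Finset.Icc 1 r, w s)) := by
  have hγ : (2 : ℝ) ≤ m + α := le_add_of_le_of_nonneg (by exact_mod_cast hm) hα.nonneg
  rw [one_div] at hβ
  subst hβ
  set c : ℝ := (m + α) / Phi0 (m + α)⁻¹ with hc_def
  have hA : 0 < Phi0 (m + α)⁻¹ := Phi0_pos (by positivity) (inv_le_one_of_one_le₀ (by linarith))
  -- `c ≥ 1` is what gives `r ≤ j` in the second form.
  have hAγ : Phi0 (m + α)⁻¹ ≤ m + α :=
    (Phi0_le_inv (by positivity) (one_div (2 : ℝ) ▸ inv_anti₀ two_pos hγ)).trans_eq (inv_inv _)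
  have hc : 1 ≤ c := (one_le_div hA).2 hAγ
  set S : ℕ → ℕ := fun r => ∑ s ∈ Icc 1 r, w s
  obtain ⟨i0, hi0⟩ := eventually_atTop.1 ((hα.tendsto_PhiPart_ceil (by omega) hc_def).eventually
    (Metric.ball_mem_nhds _ hε))
  refine ⟨c + m + 2, fun i => ⌈c * i⌉₊ + m * i + S i + 1,
    fun i => if (m - 1) * i + S i ≤ ⌈c * i⌉₊ then ![⌈c * i⌉₊, (m - 1) * i + S i, i, 1]
      else ![(m - 1) * i + S i, ⌈c * i⌉₊, i, 1],
    strictMono_ceil_mul_add (by positivity) (by omega) w, fun _ => le_add_self, i0,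
    fun i hi => ⟨?_, ceil_mul_add_succ_sub_lt (by positivity) m hw i, i, ⌈c * i⌉₊, rfl, ?_⟩⟩
  · have hswap : ![(m - 1) * i + S i, ⌈c * i⌉₊, i, 1] =
        ![⌈c * i⌉₊, (m - 1) * i + S i, i, 1] ∘ Equiv.swap 0 1 := by
      funext k; fin_cases k <;> rfl
    have := hi0 i hi
    dsimp only
    rw [apply_ite (PhiPart _), hswap, PhiPart_comp_perm, ite_self]
    rwa [dist_eq, sub_add_eq_sub_sub_swap] at this
  · dsimp only
    split_ifs with hform
    · exact Or.inl ⟨rfl, hform⟩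
    · refine Or.inr ⟨rfl, ?_, not_le.1 hform⟩
      exact_mod_cast (le_mul_of_one_le_left (by positivity) hc).trans (Nat.le_ceil (c * i))

/-- Lemma 12: let `m ≥ 2`, `w` a Sturmian or periodic word with slope `α`, `β = 1/(m+α)`.
For any `ε > 0` there are a constant `C`, integers `n₁ < n₂ < ⋯` and partitions
`λ^{(i)} ⊢ n_i` such that, for all sufficiently large `i`:
`|Φ(λ^{(i)}) − Φ₀(β) − 1| < ε`; `n_{i+1} − n_i < C`; and `λ^{(i)}` has one of the two forms
`(j, (m−1)r + w₁ + ⋯ + w_r, r, 1)` with `j ≥ (m−1)r + w₁ + ⋯ + w_r`, or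
`((m−1)r + w₁ + ⋯ + w_r, j, r, 1)` with `(m−1)r + w₁ + ⋯ + w_r > j ≥ r`, where in both cases
`n_i = j + mr + w₁ + ⋯ + w_r + 1`. -/
theorem exists_partitions_phi_close (m : ℕ) (hm : 2 ≤ m) (w : ℕ → ℕ) (hw : ∀ i, w i ≤ 1)
    (hword : IsSturmian w ∨ IsPeriodicWord w)
    (α : ℝ) (hα : HasSlope w α) (β : ℝ) (hβ : β = 1 / ((m : ℝ) + α))
    (ε : ℝ) (hε : 0 < ε) :
    ∃ (C : ℝ) (nseq : ℕ → ℕ) (lam : ℕ → Fin 4 → ℕ),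
      StrictMono nseq ∧ (∀ i, 1 ≤ nseq i) ∧
      ∃ i0 : ℕ, ∀ i : ℕ, i0 ≤ i →
        |PhiPart (nseq i) (lam i) - Phi0 β - 1| < ε ∧
        ((nseq (i + 1) : ℝ) - (nseq i : ℝ) < C) ∧
        ∃ r j : ℕ,
          nseq i = j + m * r + (∑ s ∈ Finset.Icc 1 r, w s) + 1 ∧
          ((lam i = ![j, (m - 1) * r + ∑ s ∈ Finset.Icc 1 r, w s, r, 1] ∧
              (m - 1) * r + (∑ s ∈ Finset.Icc 1 r, w s) ≤ j) ∨
           (lam i = ![(m - 1) * r + ∑ s ∈ Finset.Icc 1 r, w s, j, r, 1] ∧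
              r ≤ j ∧ j < (m - 1) * r + ∑ s ∈ Finset.Icc 1 r, w s)) :=
  exists_partitions_phi_close_general m hm w hw α hα β hβ ε hε
end
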